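/- Let f : ℝ^N → ℝ be convex differentiable with ∇f Lipschitz with constant L_f ≥ 0, g : ℝ^N → ℝ μ-strongly convex with μ > 0, F := f + g, A a real p×N matrix, b ∈ ℝ^p, β > 0, and P a symmetric N×N matrix with P − β AᵀA positive definite and P − β AᵀA ⪯ (μ/2)I. Set k₀ := 2L_f/μ, and for k ≥ 1 set β_k = ρ_k = kβ and P^k = kP + L_f I. Suppose there is a KKT point: x* ∈ ℝ^N, λ* ∈ ℝ^p and a subgradient w of F at x* with w = Aᵀλ* and Ax* = b. Let sequences x^k ∈ ℝ^N, λ^k ∈ ℝ^p with λ¹ = 0, r^k := A x^k − b satisfy, for each k ≥ 1: there is a subgradient v of g at x^{k+1} with ∇f(x^k) − Aᵀ(λ^k − β_k r^k) + v + P^k(x^{k+1} − x^k) = 0, and λ^{k+1} = λ^k − ρ_k r^{k+1}. Then for every t ≥ 1: max{ β‖r^{t+1}‖², ‖x^{t+1} − x*‖²_{P − β AᵀA} } ≤ (2/(t(t+k₀+1))) φ₁(x*, λ*), where φ₁(x, λ) := ((k₀+2)/(2β))‖λ‖² + ((k₀+2)/2)‖x¹ − x‖²_{P + L_f I − β AᵀA}.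 -/

import Mathlib

/-!
Write `e_k = x^k - x*`, `r^k = A x^k - b` and `Q = P - β AᵀA`. Convexity and `L_f`-smoothness
of `f`, `μ`-strong convexity of `g` and the KKT condition, combined with the optimality condition
of the `k`-th step and polarization of the resulting inner products, give the one-step inequality
`‖λ^{k+1} - λ*‖² + k²β ‖e_{k+1}‖²_Q + k²β² ‖r^{k+1}‖² + kβ(L_f + μ) ‖e_{k+1}‖²
  ≤ ‖λ^k - λ*‖² + k²β ‖e_k‖²_Q + kβ L_f ‖e_k‖²`.
Weighting it by `(k + 1 + k₀) / (2kβ)` and using `Q ⪯ (μ/2) I` together with `k₀ μ = 2 L_f`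
shows that
`Φ_k = (k+1+k₀)/(2kβ) ‖λ^k - λ*‖² + (k+1+k₀)k/2 ‖e_k‖²_Q + (k+1+k₀)L_f/2 ‖e_k‖²`
decreases by at least `(k+1+k₀)kβ/2 ‖r^{k+1}‖²` at each step, and `Φ_1 = φ₁(x*, λ*)` because
`λ¹ = 0`.
-/

/-- quadratic form `‖v‖²_W = ⟪v, W v⟫` associated to an operator `W`. -/
noncomputable def qform {E : Type*} [NormedAddCommGroup E] [InnerProductSpace ℝ E]
    (W : E →L[ℝ] E) (v : E) : ℝ := inner ℝ v (W v)

open Set Filter Topology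
open scoped InnerProduct

local notation "⟪" x ", " y "⟫" => @inner ℝ _ _ x y

section InnerProductSpace

variable {E F : Type*} [NormedAddCommGroup E] [InnerProductSpace ℝ E]
  [NormedAddCommGroup F] [InnerProductSpace ℝ F]

theorem StrongConvexOn.add_inner_add_sq_le {g : E → ℝ} {μ : ℝ} {x v : E}
    (hg : StrongConvexOn univ μ g) (hv : ∀ z, g x + ⟪v, z - x⟫ ≤ g z) (z : E) :
    g x + ⟪v, z - x⟫ + μ / 2 * ‖z - x‖ ^ 2 ≤ g z := by
  have hseg : ∀ s ∈ Ioo (0 : ℝ) 1,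
      ⟪v, z - x⟫ ≤ g z - g x - (1 - s) * (μ / 2 * ‖z - x‖ ^ 2) := by
    rintro s ⟨hs0, hs1⟩
    have hconv := hg.2 (mem_univ x) (mem_univ z) (by linarith : 0 ≤ 1 - s) hs0.le (by ring)
    have hsub := hv ((1 - s) • x + s • z)
    rw [show (1 - s) • x + s • z - x = s • (z - x) by module, real_inner_smul_right] at hsub
    rw [norm_sub_rev] at hconv
    simp only [smul_eq_mul] at hconv
    have : s * ⟪v, z - x⟫ ≤ s * (g z - g x - (1 - s) * (μ / 2 * ‖z - x‖ ^ 2)) := by linarith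
    exact le_of_mul_le_mul_left this hs0
  have hlim : Tendsto (fun s : ℝ => g z - g x - (1 - s) * (μ / 2 * ‖z - x‖ ^ 2)) (𝓝[>] 0)
      (𝓝 (g z - g x - (1 - 0) * (μ / 2 * ‖z - x‖ ^ 2))) :=
    (Continuous.tendsto (by fun_prop) 0).mono_left nhdsWithin_le_nhds
  have := ge_of_tendsto hlim (eventually_of_mem (Ioo_mem_nhdsGT one_pos) hseg)
  linarith

theorem qform_sub_of_isSymmetric {W : E →L[ℝ] E} (hW : (W : E →ₗ[ℝ] E).IsSymmetric) (u v : E) :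
    qform W (u - v) = qform W u - 2 * ⟪W v, u⟫ + qform W v := by
  have h := hW v u
  simp only [ContinuousLinearMap.coe_coe] at h
  simp only [qform, map_sub, inner_sub_left, inner_sub_right]
  rw [← h, real_inner_comm u (W v)]
  ring

theorem qform_add_smul_one (W : E →L[ℝ] E) (c : ℝ) (v : E) :
    qform (W + c • 1) v = qform W v + c * ‖v‖ ^ 2 := by
  simp [qform, inner_add_right, real_inner_smul_right]

variable [CompleteSpace E]

theorem ConvexOn.add_inner_le_of_hasGradientAt {f : E → ℝ} {G x : E}
    (hf : ConvexOn ℝ univ f) (hG : HasGradientAt f G x) (z : E) :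
    f x + ⟪G, z - x⟫ ≤ f z := by
  have hline : ConvexOn ℝ univ (f ∘ (AffineMap.lineMap x z : ℝ → E)) := by
    simpa only [preimage_univ] using hf.comp_affineMap (AffineMap.lineMap x z : ℝ →ᵃ[ℝ] E)
  have hderiv : HasDerivAt (f ∘ (AffineMap.lineMap x z : ℝ → E)) ⟪G, z - x⟫ 0 := by
    have hG' : HasFDerivAt f (InnerProductSpace.toDual ℝ E G) (AffineMap.lineMap x z (0 : ℝ)) := by
      simpa using hasGradientAt_iff_hasFDerivAt.1 hG
    simpa using hG'.comp_hasDerivAt (0 : ℝ) AffineMap.hasDerivAt_lineMap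
  have := hline.le_slope_of_hasDerivAt (mem_univ 0) (mem_univ 1) one_pos hderiv
  rw [slope_def_field] at this
  simp only [Function.comp_apply, AffineMap.lineMap_apply_one, AffineMap.lineMap_apply_zero,
    sub_zero, div_one] at this
  linarith

theorem le_add_inner_add_sq_of_lipschitz_gradient {f : E → ℝ} {Gf : E → E}
    {L : ℝ} (hf : ∀ z, HasGradientAt f (Gf z) z) (hlip : ∀ u v, ‖Gf u - Gf v‖ ≤ L * ‖u - v‖)
    (x y : E) : f y ≤ f x + ⟪Gf x, y - x⟫ + L / 2 * ‖y - x‖ ^ 2 := by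
  set d := y - x
  let ψ : ℝ → ℝ := fun s => f (x + s • d) - s * ⟪Gf x, d⟫ - L / 2 * s ^ 2 * ‖d‖ ^ 2
  have hψ : ∀ s : ℝ, HasDerivAt ψ (⟪Gf (x + s • d) - Gf x, d⟫ - L * s * ‖d‖ ^ 2) s := by
    intro s
    have hl : HasDerivAt (fun s : ℝ => x + s • d) d s := by
      simpa using ((hasDerivAt_id s).smul_const d).const_add x
    have hfl := (hasGradientAt_iff_hasFDerivAt.1 (hf (x + s • d))).comp_hasDerivAt s hl
    refine ((hfl.sub ((hasDerivAt_id s).mul_const ⟪Gf x, d⟫)).sub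
      (((hasDerivAt_pow 2 s).const_mul (L / 2)).mul_const (‖d‖ ^ 2))).congr_deriv ?_
    simp only [InnerProductSpace.toDual_apply_apply, inner_sub_left]
    ring
  have hanti : AntitoneOn ψ (Icc 0 1) := by
    refine antitoneOn_of_hasDerivWithinAt_nonpos (convex_Icc 0 1)
      (fun s _ => (hψ s).continuousAt.continuousWithinAt)
      (fun s _ => (hψ s).hasDerivWithinAt) fun s hs => ?_
    rw [interior_Icc] at hs
    have hGs : ‖Gf (x + s • d) - Gf x‖ ≤ L * s * ‖d‖ := by
      simpa [norm_smul, abs_of_pos hs.1, mul_assoc] using hlip (x + s • d) x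
    have := (real_inner_le_norm _ _).trans (mul_le_mul_of_nonneg_right hGs (norm_nonneg d))
    nlinarith
  have hψ0 : ψ 0 = f x := by simp [ψ]
  have hψ1 : ψ 1 = f y - ⟪Gf x, y - x⟫ - L / 2 * ‖y - x‖ ^ 2 := by simp [ψ, d]
  linarith [hanti (left_mem_Icc.2 zero_le_one) (right_mem_Icc.2 zero_le_one) zero_le_one]

theorem inner_add_sq_le_of_forwardBackward {f g : E → ℝ} {Gf : E → E} {L μ : ℝ}
    (hf : ConvexOn ℝ univ f) (hfgrad : ∀ z, HasGradientAt f (Gf z) z)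
    (hlip : ∀ u v, ‖Gf u - Gf v‖ ≤ L * ‖u - v‖) (hg : StrongConvexOn univ μ g)
    {xstar w x x' v : E} (hw : ∀ z, f xstar + g xstar + ⟪w, z - xstar⟫ ≤ f z + g z)
    (hv : ∀ z, g x' + ⟪v, z - x'⟫ ≤ g z) :
    ⟪w, x' - xstar⟫ + μ / 2 * ‖x' - xstar‖ ^ 2
      ≤ ⟪Gf x + v, x' - xstar⟫ + L / 2 * ‖x' - x‖ ^ 2 := by
  have hF := hw x'
  have hg' := hg.add_inner_add_sq_le hv xstar
  have hf' := hf.add_inner_le_of_hasGradientAt (hfgrad x) xstar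
  have hdescent := le_add_inner_add_sq_of_lipschitz_gradient hfgrad hlip x x'
  have hsplit : ⟪Gf x, x' - xstar⟫ = ⟪Gf x, x' - x⟫ - ⟪Gf x, xstar - x⟫ := by
    rw [← inner_sub_right, sub_sub_sub_cancel_right]
  rw [← neg_sub x' xstar, inner_neg_right, norm_neg] at hg'
  rw [inner_add_left, hsplit]
  linarith

variable [CompleteSpace F]

theorem LinearMap.IsSymmetric.sub_smul_adjoint_comp_self {P : E →L[ℝ] E}
    (hP : (P : E →ₗ[ℝ] E).IsSymmetric) (β : ℝ) (A : E →L[ℝ] F) :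
    ((P - β • (A† ∘L A) : E →L[ℝ] E) : E →ₗ[ℝ] E).IsSymmetric := by
  intro u v
  have := hP u v
  simp only [ContinuousLinearMap.coe_coe] at this
  simp [inner_sub_left, inner_sub_right, real_inner_smul_left, real_inner_smul_right,
    ContinuousLinearMap.adjoint_inner_left, ContinuousLinearMap.adjoint_inner_right, this]

theorem add_eq_adjoint_of_linearizedStep {A : E →L[ℝ] F} {P : E →L[ℝ] E} {b lam lam' : F}
    {G v x x' : E} {c β L : ℝ}
    (hstep : G - (A†) (lam - (c * β) • (A x - b)) + v + (c • P + L • 1) (x' - x) = 0)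
    (hlam : lam' = lam - (c * β) • (A x' - b)) :
    G + v = (A†) lam' - c • (P - β • (A† ∘L A)) (x' - x) - L • (x' - x) := by
  rw [← sub_eq_zero, ← hstep, hlam]
  simp only [map_sub, map_smul, add_apply, sub_apply, smul_apply, one_apply_eq_self,
    ContinuousLinearMap.comp_apply]
  module

theorem linearizedStep_descent {f g : E → ℝ} {Gf : E → E} {L μ β c : ℝ} (hβ : 0 ≤ β)
    (hc : 0 ≤ c) (hf : ConvexOn ℝ univ f) (hfgrad : ∀ z, HasGradientAt f (Gf z) z)
    (hlip : ∀ u v, ‖Gf u - Gf v‖ ≤ L * ‖u - v‖) (hg : StrongConvexOn univ μ g)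
    {A : E →L[ℝ] F} {P : E →L[ℝ] E} (hP : (P : E →ₗ[ℝ] E).IsSymmetric)
    (hQ : ∀ u, 0 ≤ qform (P - β • (A† ∘L A)) u)
    {b lamstar lam lam' : F} {xstar x x' v : E}
    (hw : ∀ z, f xstar + g xstar + ⟪(A†) lamstar, z - xstar⟫ ≤ f z + g z) (hfeas : A xstar = b)
    (hv : ∀ z, g x' + ⟪v, z - x'⟫ ≤ g z)
    (hstep : Gf x - (A†) (lam - (c * β) • (A x - b)) + v + (c • P + L • 1) (x' - x) = 0)
    (hlam : lam' = lam - (c * β) • (A x' - b)) :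
    ‖lam' - lamstar‖ ^ 2 + c ^ 2 * β * qform (P - β • (A† ∘L A)) (x' - xstar)
        + c ^ 2 * β ^ 2 * ‖A x' - b‖ ^ 2 + c * β * (L + μ) * ‖x' - xstar‖ ^ 2
      ≤ ‖lam - lamstar‖ ^ 2 + c ^ 2 * β * qform (P - β • (A† ∘L A)) (x - xstar)
        + c * β * L * ‖x - xstar‖ ^ 2 := by
  have hFB := inner_add_sq_le_of_forwardBackward (x := x) hf hfgrad hlip hg hw hv
  rw [add_eq_adjoint_of_linearizedStep hstep hlam] at hFB
  have hAe : A (x' - xstar) = A x' - b := by rw [map_sub, hfeas]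
  rw [inner_sub_left, inner_sub_left, real_inner_smul_left, real_inner_smul_left,
    ContinuousLinearMap.adjoint_inner_left, ContinuousLinearMap.adjoint_inner_left, hAe] at hFB
  have hsplit : x - xstar = (x' - xstar) - (x' - x) := by abel
  have hQpolar := qform_sub_of_isSymmetric (hP.sub_smul_adjoint_comp_self β A)
    (x' - xstar) (x' - x)
  have hnorm := norm_sub_sq_real (x' - xstar) (x' - x)
  rw [real_inner_comm] at hnorm
  rw [← hsplit] at hQpolar hnorm
  have hdual : ‖lam - lamstar‖ ^ 2 = ‖lam' - lamstar‖ ^ 2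
      + 2 * (c * β) * ⟪lam' - lamstar, A x' - b⟫ + (c * β) ^ 2 * ‖A x' - b‖ ^ 2 := by
    rw [show lam - lamstar = (lam' - lamstar) + (c * β) • (A x' - b) by rw [hlam]; abel,
      norm_add_sq_real, real_inner_smul_right, norm_smul, Real.norm_eq_abs,
      abs_of_nonneg (mul_nonneg hc hβ)]
    ring
  rw [inner_sub_left] at hdual
  linear_combination (2 * c * β) * hFB - (c ^ 2 * β) * hQpolar - (c * β * L) * hnorm - hdual
    + (c ^ 2 * β) * hQ (x' - x)

end InnerProductSpace

section Lyapunov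

variable {a q n r : ℕ → ℝ} {β L κ μ : ℝ}

variable (a q n β L κ) in
/-- `Φ_k` of the sketch above, for `k ≥ 1`. -/
noncomputable def lyapunov (k : ℕ) : ℝ :=
  (k + 1 + κ) / (2 * k * β) * a k + (k + 1 + κ) * k / 2 * q k + (k + 1 + κ) * L / 2 * n k

theorem lyapunov_nonneg (hβ : 0 < β) (hL : 0 ≤ L) (hκ : 0 ≤ κ) {k : ℕ} (ha : 0 ≤ a k)
    (hq : 0 ≤ q k) (hn : 0 ≤ n k) : 0 ≤ lyapunov a q n β L κ k := by
  unfold lyapunov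
  positivity

theorem lyapunov_succ_add_le (hβ : 0 < β) (hκ : 0 ≤ κ) (hκμ : 2 * L ≤ κ * μ) {k : ℕ}
    (hk : 1 ≤ k) (ha : 0 ≤ a (k + 1)) (hn : 0 ≤ n (k + 1)) (hqn : q (k + 1) ≤ μ / 2 * n (k + 1))
    (hkey : a (k + 1) + (k : ℝ) ^ 2 * β * q (k + 1) + (k : ℝ) ^ 2 * β ^ 2 * r (k + 1)
        + k * β * (L + μ) * n (k + 1) ≤ a k + (k : ℝ) ^ 2 * β * q k + k * β * L * n k) :
    lyapunov a q n β L κ (k + 1) + (k + 1 + κ) * k * β / 2 * r (k + 1)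
      ≤ lyapunov a q n β L κ k := by
  have hdual : (k + 1 + 1 + κ) / (2 * (k + 1) * β) * a (k + 1)
      ≤ (k + 1 + κ) / (2 * k * β) * a (k + 1) := by
    refine mul_le_mul_of_nonneg_right ?_ ha
    rw [div_le_div_iff₀ (by positivity) (by positivity)]
    nlinarith
  have hprimal : (k + 1 + 1 + κ) * (k + 1) / 2 * q (k + 1) + (k + 1 + 1 + κ) * L / 2 * n (k + 1)
      ≤ (k + 1 + κ) * k / 2 * q (k + 1) + (k + 1 + κ) * (L + μ) / 2 * n (k + 1) := by
    nlinarith [mul_le_mul_of_nonneg_left hqn (by positivity : (0 : ℝ) ≤ 2 * k + 2 + κ),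
      mul_le_mul_of_nonneg_right hκμ hn]
  have hscaled := mul_le_mul_of_nonneg_left hkey
    (by positivity : (0 : ℝ) ≤ (k + 1 + κ) / (2 * k * β))
  have hlhs : (k + 1 + κ) / (2 * k * β) * (a (k + 1) + (k : ℝ) ^ 2 * β * q (k + 1)
        + (k : ℝ) ^ 2 * β ^ 2 * r (k + 1) + k * β * (L + μ) * n (k + 1))
      = (k + 1 + κ) / (2 * k * β) * a (k + 1) + (k + 1 + κ) * k / 2 * q (k + 1)
        + (k + 1 + κ) * k * β / 2 * r (k + 1) + (k + 1 + κ) * (L + μ) / 2 * n (k + 1) := by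
    field_simp
  have hrhs : (k + 1 + κ) / (2 * k * β) * (a k + (k : ℝ) ^ 2 * β * q k + k * β * L * n k)
      = lyapunov a q n β L κ k := by
    unfold lyapunov
    field_simp
  rw [hlhs, hrhs] at hscaled
  unfold lyapunov at hscaled ⊢
  push_cast
  linarith

theorem rate_of_lyapunov (hβ : 0 < β) (hL : 0 ≤ L) (hκ : 0 ≤ κ) (hκμ : 2 * L ≤ κ * μ)
    (ha : ∀ k, 0 ≤ a k) (hq : ∀ k, 0 ≤ q k) (hn : ∀ k, 0 ≤ n k) (hqn : ∀ k, q k ≤ μ / 2 * n k)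
    (hr : ∀ k, 0 ≤ r k)
    (hkey : ∀ k : ℕ, 1 ≤ k → a (k + 1) + (k : ℝ) ^ 2 * β * q (k + 1)
        + (k : ℝ) ^ 2 * β ^ 2 * r (k + 1) + k * β * (L + μ) * n (k + 1)
        ≤ a k + (k : ℝ) ^ 2 * β * q k + k * β * L * n k)
    {t : ℕ} (ht : 1 ≤ t) :
    max (β * r (t + 1)) (q (t + 1)) ≤ 2 / (t * (t + κ + 1)) *
      ((κ + 2) / (2 * β) * a 1 + (κ + 2) / 2 * (q 1 + L * n 1)) := by
  have hstep : ∀ k, 1 ≤ k → lyapunov a q n β L κ (k + 1) + (k + 1 + κ) * k * β / 2 * r (k + 1)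
      ≤ lyapunov a q n β L κ k := fun k hk =>
    lyapunov_succ_add_le hβ hκ hκμ hk (ha _) (hn _) (hqn _) (hkey k hk)
  have hanti : AntitoneOn (lyapunov a q n β L κ) {k | 1 ≤ k} :=
    antitoneOn_nat_Ici_of_succ_le fun k hk =>
      le_of_add_le_of_nonneg_left (hstep k hk) (mul_nonneg (by positivity) (hr _))
  have hΦt := hanti (le_refl 1) ht ht
  have hΦt' := hanti (le_refl 1) (by omega : 1 ≤ t + 1) (by omega)
  have hΦnonneg := lyapunov_nonneg hβ hL hκ (ha (t + 1)) (hq (t + 1)) (hn (t + 1))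
  have hΦ1 : lyapunov a q n β L κ 1 = (κ + 2) / (2 * β) * a 1 + (κ + 2) / 2 * (q 1 + L * n 1) := by
    simp only [lyapunov, Nat.cast_one]
    ring
  rw [← hΦ1]
  refine max_le ?_ ?_ <;> rw [div_mul_eq_mul_div, le_div_iff₀ (by positivity)]
  · nlinarith [hstep t ht]
  · have hqΦ : (t + 1 + 1 + κ) * (t + 1) / 2 * q (t + 1) ≤ lyapunov a q n β L κ (t + 1) := by
      unfold lyapunov
      push_cast
      linarith
        [mul_nonneg (by positivity : (0 : ℝ) ≤ (t + 1 + 1 + κ) / (2 * (t + 1) * β)) (ha (t + 1)),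
          mul_nonneg (by positivity : (0 : ℝ) ≤ (t + 1 + 1 + κ) * L / 2) (hn (t + 1))]
    nlinarith [hq (t + 1)]

end Lyapunov

/-- Theorem 2.3 of the paper (rate of order 1/t²), first part. -/
theorem stmt_4
    {p N : ℕ}
    (f g : EuclideanSpace ℝ (Fin N) → ℝ)
    (Gf : EuclideanSpace ℝ (Fin N) → EuclideanSpace ℝ (Fin N))
    (Lf : ℝ) (hLf : 0 ≤ Lf)
    (hfconv : ConvexOn ℝ Set.univ f)
    (hfgrad : ∀ z, HasGradientAt f (Gf z) z)
    (hflip : ∀ u v, ‖Gf u - Gf v‖ ≤ Lf * ‖u - v‖)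
    (μ : ℝ) (hμ : 0 < μ)
    (hg : ConvexOn ℝ Set.univ (fun z => g z - μ / 2 * ‖z‖ ^ 2))
    (A : EuclideanSpace ℝ (Fin N) →L[ℝ] EuclideanSpace ℝ (Fin p))
    (b : EuclideanSpace ℝ (Fin p))
    (β : ℝ) (hβ : 0 < β)
    (P : EuclideanSpace ℝ (Fin N) →L[ℝ] EuclideanSpace ℝ (Fin N))
    (hPsym : ∀ u v, inner ℝ (P u) v = (inner ℝ u (P v) : ℝ))
    (hPpos : ∀ v, v ≠ 0 →
      0 < qform (P - β • ((ContinuousLinearMap.adjoint A).comp A)) v)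
    (hPle : ∀ v,
      qform (P - β • ((ContinuousLinearMap.adjoint A).comp A)) v ≤ μ / 2 * ‖v‖ ^ 2)
    (xstar : EuclideanSpace ℝ (Fin N)) (lamstar : EuclideanSpace ℝ (Fin p))
    (w : EuclideanSpace ℝ (Fin N))
    (hw : ∀ z, (f xstar + g xstar) + inner ℝ w (z - xstar) ≤ f z + g z)
    (hkkt : w = ContinuousLinearMap.adjoint A lamstar)
    (hfeas : A xstar = b)
    (x : ℕ → EuclideanSpace ℝ (Fin N)) (lamseq : ℕ → EuclideanSpace ℝ (Fin p))
    (hlam1 : lamseq 1 = 0)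
    (hiter : ∀ k : ℕ, 1 ≤ k → ∃ v : EuclideanSpace ℝ (Fin N),
      (∀ z, g (x (k + 1)) + inner ℝ v (z - x (k + 1)) ≤ g z) ∧
      Gf (x k) - ContinuousLinearMap.adjoint A
          (lamseq k - ((k : ℝ) * β) • (A (x k) - b))
        + v + ((k : ℝ) • P + Lf • 1) (x (k + 1) - x k) = 0)
    (hlam : ∀ k : ℕ, 1 ≤ k →
      lamseq (k + 1) = lamseq k - ((k : ℝ) * β) • (A (x (k + 1)) - b))
    (t : ℕ) (ht : 1 ≤ t) :
    max (β * ‖A (x (t + 1)) - b‖ ^ 2)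
        (qform (P - β • ((ContinuousLinearMap.adjoint A).comp A)) (x (t + 1) - xstar))
      ≤ 2 / ((t : ℝ) * ((t : ℝ) + 2 * Lf / μ + 1)) *
        ((2 * Lf / μ + 2) / (2 * β) * ‖lamstar‖ ^ 2
          + (2 * Lf / μ + 2) / 2 *
            qform (P + Lf • 1 - β • ((ContinuousLinearMap.adjoint A).comp A)) (x 1 - xstar)) := by
  set Q := P - β • ((ContinuousLinearMap.adjoint A).comp A)
  have hQ : ∀ v, 0 ≤ qform Q v := fun v => by
    rcases eq_or_ne v 0 with rfl | hv
    · simp [qform]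
    · exact (hPpos v hv).le
  subst hkkt
  have hkey : ∀ k : ℕ, 1 ≤ k →
      ‖lamseq (k + 1) - lamstar‖ ^ 2 + (k : ℝ) ^ 2 * β * qform Q (x (k + 1) - xstar)
        + (k : ℝ) ^ 2 * β ^ 2 * ‖A (x (k + 1)) - b‖ ^ 2 + k * β * (Lf + μ) * ‖x (k + 1) - xstar‖ ^ 2
      ≤ ‖lamseq k - lamstar‖ ^ 2 + (k : ℝ) ^ 2 * β * qform Q (x k - xstar)
        + k * β * Lf * ‖x k - xstar‖ ^ 2 := fun k hk => by
    obtain ⟨v, hv, hstep⟩ := hiter k hk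
    exact linearizedStep_descent hβ.le k.cast_nonneg hfconv hfgrad hflip
      (strongConvexOn_iff_convex.mpr hg) hPsym hQ hw hfeas hv hstep (hlam k hk)
  have hrate := rate_of_lyapunov (a := fun k => ‖lamseq k - lamstar‖ ^ 2)
    (q := fun k => qform Q (x k - xstar)) (n := fun k => ‖x k - xstar‖ ^ 2)
    (r := fun k => ‖A (x k) - b‖ ^ 2) (κ := 2 * Lf / μ) hβ hLf (by positivity)
    (div_mul_cancel₀ _ hμ.ne').ge (fun _ => sq_nonneg _) (fun k => hQ _) (fun _ => sq_nonneg _)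
    (fun k => hPle _) (fun _ => sq_nonneg _) hkey ht
  rw [add_sub_right_comm, qform_add_smul_one]
  simpa only [hlam1, zero_sub, norm_neg] using hrate
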